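/- For every t ∈ (0,T]: g*₋(t) ≤ g*(t); if μ({t}) > 0 then g*(t) = max(g*₋(t), g(t)); and if μ({t}) = 0 then g*(t) = g*₋(t) (all equalities and inequalities in ℝ ∪ {−∞}). -/

import Mathlib

/-!
The integral `∫_{(0,t]} (g(s) + n s - α)⁺ dμ(s)` vanishes exactly when `α` dominates the essential
supremum of `g(s) + n s` on `(0,t]`, so `gⁿ(t) = -n t + ess sup_{(0,t]} (g(s) + n s)`. The essential
supremum over `(0,t]` is monotone in `t`, and its left limit at `t` is the essential supremum over
`(0,t)`. Splitting `(0,t] = (0,t) ∪ {t}`, the atom at `t` (if any) contributes exactly the value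
`g(t) + n t`, which gives `gⁿ(t) = max (gⁿ(t-), g(t))`; and if `μ {t} = 0` the two essential suprema
agree. Taking the infimum over `n` commutes with `max (·, g(t))`.
-/

open MeasureTheory Filter Topology Set

/-- `gnProc μ g n t` is the process
`gⁿ(t) = -n·t + inf{α ∈ ℝ : ∫_{(0,t]} (g(s) + n·s - α)⁺ dμ(s) = 0}`,
with values in `EReal` (it equals `⊥` exactly when `μ((0,t]) = 0`). -/
noncomputable def gnProc (μ : Measure ℝ) (g : ℝ → ℝ) (n : ℕ) (t : ℝ) : EReal :=
  ((-((n : ℝ) * t) : ℝ) : EReal) +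
    sInf ((fun a : ℝ => (a : EReal)) ''
      {a : ℝ | ∫⁻ s in Set.Ioc (0 : ℝ) t, ENNReal.ofReal (g s + (n : ℝ) * s - a) ∂μ = 0})

/-- `gStar μ g t = inf_{n ∈ ℕ} gⁿ(t)`. -/
noncomputable def gStar (μ : Measure ℝ) (g : ℝ → ℝ) (t : ℝ) : EReal :=
  ⨅ n : ℕ, gnProc μ g n t

section EssSup

variable {α β : Type*} [MeasurableSpace α] [CompleteLinearOrder β]

lemma essSup_dirac [MeasurableSingletonClass α] (f : α → β) (a : α) :
    essSup f (Measure.dirac a) = f a := by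
  rw [essSup, ae_dirac_eq, limsup_eq]
  simp only [eventually_pure]
  exact csInf_Ici

lemma essSup_restrict_singleton [MeasurableSingletonClass α] (f : α → β) (μ : Measure α) {a : α}
    (ha : μ {a} ≠ 0) : essSup f (μ.restrict {a}) = f a := by
  rw [Measure.restrict_singleton, essSup_ennreal_smul_measure ha, essSup_dirac]

variable [TopologicalSpace β] [FirstCountableTopology β] [OrderTopology β]

lemma essSup_add_measure (f : α → β) (μ ν : Measure α) :
    essSup f (μ + ν) = essSup f μ ⊔ essSup f ν := by
  refine le_antisymm (essSup_le_of_ae_le _ ?_)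
    (sup_le (essSup_mono_measure' (Measure.le_add_right le_rfl))
      (essSup_mono_measure' (Measure.le_add_left le_rfl)))
  refine ae_add_measure_iff.2 ⟨?_, ?_⟩
  · filter_upwards [ae_le_essSup (f := f) (μ := μ)] with x hx using hx.trans le_sup_left
  · filter_upwards [ae_le_essSup (f := f) (μ := ν)] with x hx using hx.trans le_sup_right

lemma essSup_restrict_Ioo_eq_sSup (f : ℝ → β) (μ : Measure ℝ) (a b : ℝ) :
    essSup f (μ.restrict (Ioo a b)) =
      sSup ((fun c => essSup f (μ.restrict (Ioc a c))) '' Iio b) := by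
  have hunion : Ioo a b = ⋃ k : ℕ, Ioc a (b - 1 / (k + 1)) := by
    ext x
    simp only [mem_Ioo, mem_iUnion, mem_Ioc]
    constructor
    · rintro ⟨hax, hxb⟩
      obtain ⟨k, hk⟩ := exists_nat_one_div_lt (sub_pos.2 hxb)
      exact ⟨k, hax, by linarith⟩
    · rintro ⟨k, hax, hxk⟩
      exact ⟨hax, hxk.trans_lt (sub_lt_self b Nat.one_div_pos_of_nat)⟩
  refine le_antisymm ?_ (sSup_le ?_)
  · refine essSup_le_of_ae_le _ ?_
    rw [EventuallyLE, hunion, ae_restrict_iUnion_iff]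
    intro k
    filter_upwards [ae_le_essSup (f := f) (μ := μ.restrict (Ioc a (b - 1 / (k + 1))))] with x hx
    exact hx.trans (le_sSup (mem_image_of_mem _ (sub_lt_self b Nat.one_div_pos_of_nat)))
  · rintro _ ⟨c, hcb, rfl⟩
    exact essSup_mono_measure'
      (Measure.restrict_mono (Ioc_subset_Ioo_right hcb) le_rfl)

end EssSup

lemma EReal.sInf_coe_image_setOf_le (e : EReal) :
    sInf ((fun a : ℝ => (a : EReal)) '' {a : ℝ | e ≤ a}) = e := by
  refine le_antisymm (EReal.le_of_forall_lt_iff_le.1 fun z hz => ?_) (le_sInf ?_)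
  · exact sInf_le ⟨z, hz.le, rfl⟩
  · rintro _ ⟨a, ha, rfl⟩
    exact ha

lemma lintegral_ofReal_sub_eq_zero_iff {α : Type*} [MeasurableSpace α] {μ : Measure α}
    {f : α → ℝ} (hf : Measurable f) (a : ℝ) :
    ∫⁻ x, ENNReal.ofReal (f x - a) ∂μ = 0 ↔ essSup (fun x => (f x : EReal)) μ ≤ a := by
  rw [lintegral_eq_zero_iff (by fun_prop)]
  have hae : (fun x => ENNReal.ofReal (f x - a)) =ᵐ[μ] 0 ↔ ∀ᵐ x ∂μ, (f x : EReal) ≤ a := by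
    simp only [EventuallyEq, Pi.zero_apply, ENNReal.ofReal_eq_zero, sub_nonpos,
      EReal.coe_le_coe_iff]
  rw [hae]
  exact ⟨essSup_le_of_ae_le _, fun h => (ae_le_essSup).mono fun x hx => hx.trans h⟩

section gnProc

variable (μ : Measure ℝ) (g : ℝ → ℝ)

noncomputable def driftEssSup (n : ℕ) (S : Set ℝ) : EReal :=
  essSup (fun s => ((g s + n * s : ℝ) : EReal)) (μ.restrict S)

noncomputable def gnProcLeftLim (n : ℕ) (t : ℝ) : EReal :=
  ((-((n : ℝ) * t) : ℝ) : EReal) + driftEssSup μ g n (Ioo 0 t)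

variable {g}

lemma gnProc_eq_driftEssSup (hg : Measurable g) (n : ℕ) (t : ℝ) :
    gnProc μ g n t = ((-((n : ℝ) * t) : ℝ) : EReal) + driftEssSup μ g n (Ioc 0 t) := by
  have hf : Measurable fun s => g s + (n : ℝ) * s := hg.add (measurable_id.const_mul _)
  simp only [gnProc, lintegral_ofReal_sub_eq_zero_iff hf, EReal.sInf_coe_image_setOf_le,
    driftEssSup]

lemma tendsto_gnProc_nhdsLT (hg : Measurable g) (n : ℕ) (t : ℝ) :
    Tendsto (gnProc μ g n) (𝓝[<] t) (𝓝 (gnProcLeftLim μ g n t)) := by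
  have hmono : Monotone fun s => driftEssSup μ g n (Ioc 0 s) := fun s s' hss' =>
    essSup_mono_measure' (Measure.restrict_mono (Ioc_subset_Ioc_right hss') le_rfl)
  have hess : Tendsto (fun s => driftEssSup μ g n (Ioc 0 s)) (𝓝[<] t)
      (𝓝 (driftEssSup μ g n (Ioo 0 t))) := by
    rw [driftEssSup, essSup_restrict_Ioo_eq_sSup]
    exact hmono.tendsto_nhdsLT t
  have hdrift : Tendsto (fun s : ℝ => ((-((n : ℝ) * s) : ℝ) : EReal)) (𝓝[<] t)
      (𝓝 ((-((n : ℝ) * t) : ℝ) : EReal)) :=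
    (continuous_coe_real_ereal.comp (by fun_prop)).tendsto t |>.mono_left nhdsWithin_le_nhds
  have hadd : ContinuousAt (fun p : EReal × EReal => p.1 + p.2)
      (((-((n : ℝ) * t) : ℝ) : EReal), driftEssSup μ g n (Ioo 0 t)) :=
    EReal.continuousAt_add (Or.inl (EReal.coe_ne_top _)) (Or.inl (EReal.coe_ne_bot _))
  simp_rw [funext (gnProc_eq_driftEssSup μ hg n)]
  exact hadd.tendsto.comp (hdrift.prodMk_nhds hess)

lemma gnProc_eq_gnProcLeftLim (hg : Measurable g) {t : ℝ} (ht : μ {t} = 0) (n : ℕ) :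
    gnProc μ g n t = gnProcLeftLim μ g n t := by
  rw [gnProc_eq_driftEssSup μ hg, gnProcLeftLim, driftEssSup, driftEssSup,
    Measure.restrict_congr_set (Ioo_ae_eq_Ioc' ht)]

lemma gnProc_eq_max_gnProcLeftLim (hg : Measurable g) {t : ℝ} (ht : 0 < t) (hat : μ {t} ≠ 0)
    (n : ℕ) : gnProc μ g n t = max (gnProcLeftLim μ g n t) (g t : EReal) := by
  have hsplit : μ.restrict (Ioc 0 t) = μ.restrict (Ioo 0 t) + μ.restrict {t} := by
    rw [← Ioo_union_right ht, Measure.restrict_union _ (measurableSet_singleton t)]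
    exact disjoint_singleton_right.2 fun h => h.2.false
  rw [gnProc_eq_driftEssSup μ hg, gnProcLeftLim, driftEssSup, driftEssSup, hsplit,
    essSup_add_measure, essSup_restrict_singleton _ _ hat, ← max_add_add_left, ← EReal.coe_add]
  congr 2
  ring

end gnProc

theorem stmt_8_general (T : ℝ) (μ : Measure ℝ)
    (g : ℝ → ℝ) (hg : Measurable g)
    (t : ℝ) (ht : t ∈ Set.Ioc (0 : ℝ) T) :
    ∃ L : ℕ → EReal,
      (∀ n : ℕ, Tendsto (gnProc μ g n) (𝓝[<] t) (𝓝 (L n))) ∧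
      (⨅ n : ℕ, L n) ≤ gStar μ g t ∧
      (0 < μ {t} → gStar μ g t = max (⨅ n : ℕ, L n) ((g t : ℝ) : EReal)) ∧
      (μ {t} = 0 → gStar μ g t = ⨅ n : ℕ, L n) := by
  refine ⟨fun n => gnProcLeftLim μ g n t, fun n => tendsto_gnProc_nhdsLT μ hg n t,
    iInf_mono fun n => ?_, fun hat => ?_, fun hat => ?_⟩
  · rcases eq_or_ne (μ {t}) 0 with hat | hat
    · exact (gnProc_eq_gnProcLeftLim μ hg hat n).ge
    · exact (gnProc_eq_max_gnProcLeftLim μ hg ht.1 hat n).symm ▸ le_max_left _ _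
  · simp_rw [gStar, gnProc_eq_max_gnProcLeftLim μ hg ht.1 hat.ne']
    exact (iInf_sup_eq _ _).symm
  · simp_rw [gStar, gnProc_eq_gnProcLeftLim μ hg hat]

/-- For every `t ∈ (0,T]`: the left limits `gⁿ(t−)` exist, `g*₋(t) ≤ g*(t)`; if `μ({t}) > 0`
then `g*(t) = max(g*₋(t), g(t))`; and if `μ({t}) = 0` then `g*(t) = g*₋(t)`, where
`g*(t) = inf_n gⁿ(t)` and `g*₋(t) = inf_n gⁿ(t−)`, all in `ℝ ∪ {−∞}`. -/
theorem stmt_8 (T : ℝ) (hT : 0 < T) (μ : Measure ℝ) [IsFiniteMeasure μ]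
    (hsupp : μ (Set.Ioc (0 : ℝ) T)ᶜ = 0)
    (g : ℝ → ℝ) (hg : Measurable g)
    (α₀ : ℝ) (hbdd : ∀ᵐ s ∂μ, s ∈ Set.Ioc (0 : ℝ) T → g s ≤ α₀)
    (t : ℝ) (ht : t ∈ Set.Ioc (0 : ℝ) T) :
    ∃ L : ℕ → EReal,
      (∀ n : ℕ, Tendsto (gnProc μ g n) (𝓝[<] t) (𝓝 (L n))) ∧
      (⨅ n : ℕ, L n) ≤ gStar μ g t ∧
      (0 < μ {t} → gStar μ g t = max (⨅ n : ℕ, L n) ((g t : ℝ) : EReal)) ∧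
      (μ {t} = 0 → gStar μ g t = ⨅ n : ℕ, L n) :=
  stmt_8_general T μ g hg t ht
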